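/- arXiv:2008.01712 — 4 statements merged into one kernel-verified Lean document; each statement's English description precedes it below -/
import Mathlib

section
/- Let n ≥ 2 and X the n×n matrix with diagonal entries 1 and off-diagonal entries −1/(n−1). If r, r' ∈ ℝⁿ both solve X·r = y for the same y, then r − r' is a constant vector, i.e., there exists c ∈ ℝ with r_i − r'_i = c for all i. -/
namespace Matrix

variable {K ι : Type*} [Field K] [Fintype ι]

theorem mulVec_apply_of_diag_of_offDiag {X : Matrix ι ι K} {α β : K}
    (hdiag : ∀ i, X i i = α) (hoff : ∀ i j, i ≠ j → X i j = β) (v : ι → K) (i : ι) :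
    (X *ᵥ v) i = (α - β) * v i + β * ∑ j, v j := by
  classical
  have hrest : ∑ j ∈ Finset.univ.erase i, X i j * v j = β * (∑ j, v j - v i) := by
    rw [← Finset.sum_erase_eq_sub (Finset.mem_univ i), Finset.mul_sum]
    exact Finset.sum_congr rfl fun j hj => by rw [hoff i j (Finset.ne_of_mem_erase hj).symm]
  rw [mulVec, dotProduct, ← Finset.add_sum_erase _ _ (Finset.mem_univ i), hdiag, hrest]
  ring

theorem exists_const_of_mulVec_eq_zero_of_diag_of_offDiag {X : Matrix ι ι K} {α β : K}
    (hdiag : ∀ i, X i i = α) (hoff : ∀ i j, i ≠ j → X i j = β) (hαβ : α ≠ β)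
    {v : ι → K} (hv : X *ᵥ v = 0) : ∃ c, ∀ i, v i = c := by
  refine ⟨-β * (∑ j, v j) / (α - β), fun i => ?_⟩
  have hi := congrFun hv i
  rw [mulVec_apply_of_diag_of_offDiag hdiag hoff, Pi.zero_apply] at hi
  rw [eq_div_iff (sub_ne_zero.mpr hαβ)]
  linear_combination hi

end Matrix

theorem stmt_8 (n : ℕ) (hn : 2 ≤ n)
    (X : Matrix (Fin n) (Fin n) ℝ)
    (hdiag : ∀ i, X i i = 1)
    (hoff : ∀ i j, i ≠ j → X i j = -1 / ((n : ℝ) - 1))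
    (r r' y : Fin n → ℝ)
    (hr : X.mulVec r = y) (hr' : X.mulVec r' = y) :
    ∃ c : ℝ, ∀ i, r i - r' i = c := by
  have hoff_neg : -1 / ((n : ℝ) - 1) < 0 := by
    have : (2 : ℝ) ≤ n := by exact_mod_cast hn
    exact div_neg_of_neg_of_pos (by norm_num) (by linarith)
  have hker : X.mulVec (r - r') = 0 := by rw [Matrix.mulVec_sub, hr, hr', sub_self]
  exact Matrix.exists_const_of_mulVec_eq_zero_of_diag_of_offDiag hdiag hoff
    (by linarith) hker
end

section
/- Let A be a finite set with n ≥ 2 elements. Suppose Q, r, η : A → ℝ satisfy Q(a) = r(a) + v(a) for some v : A → ℝ with η(a) = log(π(a)) − v(a), where π is the softmax of Q. Then r(a) = η(a) + (1/(n−1))·Σ_{b≠a} (r(b) − η(b)) for all a ∈ A. -/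
open Real Finset

theorem stmt_11 {A : Type*} [Fintype A] [DecidableEq A] (n : ℕ) (hn : 2 ≤ n)
    (hcard : Fintype.card A = n)
    (Q r v η pol : A → ℝ)
    (hpol : ∀ a, pol a = Real.exp (Q a) / ∑ a', Real.exp (Q a'))
    (hQ : ∀ a, Q a = r a + v a)
    (hη : ∀ a, η a = Real.log (pol a) - v a) :
    ∀ a : A, r a = η a +
      (1 / ((n : ℝ) - 1)) * ∑ b ∈ Finset.univ.erase a, (r b - η b) := by
  have hne : Nonempty A := Fintype.card_pos_iff.mp (by omega)
  have hS : (0:ℝ) < ∑ a', Real.exp (Q a') :=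
    Finset.sum_pos (fun a _ => Real.exp_pos _) (univ_nonempty)
  have key : ∀ a, r a - η a = Real.log (∑ a', Real.exp (Q a')) := by
    intro a
    have : Real.log (pol a) = Q a - Real.log (∑ a', Real.exp (Q a')) := by
      rw [hpol, Real.log_div (Real.exp_ne_zero _) (ne_of_gt hS), Real.log_exp]
    rw [hη, this, hQ]; ring
  intro a
  have hsum : ∑ b ∈ Finset.univ.erase a, (r b - η b)
      = (n - 1 : ℝ) * Real.log (∑ a', Real.exp (Q a')) := by
    rw [Finset.sum_congr rfl (fun b _ => key b), Finset.sum_const,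
      Finset.card_erase_of_mem (mem_univ a), Finset.card_univ, hcard, nsmul_eq_mul]
    push_cast [Nat.cast_sub (by omega : 1 ≤ n)]
    ring
  have hn1 : (n:ℝ) - 1 ≠ 0 := by
    have : (2:ℝ) ≤ n := by exact_mod_cast hn
    linarith
  rw [hsum]
  field_simp
  linarith [key a]
end

section
/- Let A be a finite set with n ≥ 2 elements and let Q, v : A → ℝ with π the softmax of Q. Define r(a) = Q(a) − v(a) and η(a) = log(π(a)) − v(a). Then the vector r satisfies the linear system X·r = y, where X has diagonal 1 and off-diagonal −1/(n−1), and y_a = η(a) − (1/(n−1))·Σ_{b≠a} η(b). -/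
open Real Finset

theorem stmt_12 (n : ℕ) (hn : 2 ≤ n)
    (Q v : Fin n → ℝ) (pol : Fin n → ℝ)
    (hpol : ∀ a, pol a = Real.exp (Q a) / ∑ b, Real.exp (Q b))
    (r η : Fin n → ℝ)
    (hr : ∀ a, r a = Q a - v a)
    (hη : ∀ a, η a = Real.log (pol a) - v a)
    (X : Matrix (Fin n) (Fin n) ℝ)
    (hdiag : ∀ a, X a a = 1)
    (hoff : ∀ a b, a ≠ b → X a b = -1 / ((n : ℝ) - 1))
    (y : Fin n → ℝ)
    (hy : ∀ a, y a = η a - (1 / ((n : ℝ) - 1)) * ∑ b ∈ Finset.univ.erase a, η b) :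
    X.mulVec r = y := by
  have hne : Nonempty (Fin n) := ⟨⟨0, by omega⟩⟩
  have hS : (0:ℝ) < ∑ b, Real.exp (Q b) :=
    Finset.sum_pos (fun b _ => Real.exp_pos _) Finset.univ_nonempty
  set L := Real.log (∑ b, Real.exp (Q b)) with hLdef
  have hηr : ∀ a, η a = r a - L := by
    intro a
    rw [hη, hr, hpol, Real.log_div (Real.exp_pos _).ne' hS.ne', Real.log_exp]
    ring
  have hn1 : ((n:ℝ) - 1) ≠ 0 := by
    have : (2:ℝ) ≤ (n:ℝ) := by exact_mod_cast hn
    linarith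
  have hcard : ∀ a : Fin n, ((Finset.univ.erase a).card : ℝ) = (n:ℝ) - 1 := by
    intro a
    rw [Finset.card_erase_of_mem (Finset.mem_univ a), Finset.card_univ, Fintype.card_fin]
    have : 1 ≤ n := by omega
    push_cast [Nat.cast_sub this]
    ring
  ext a
  have h1 : X.mulVec r a = r a + ∑ b ∈ Finset.univ.erase a, (-1/((n:ℝ)-1)) * r b := by
    rw [Matrix.mulVec, dotProduct, ← Finset.sum_erase_add _ _ (Finset.mem_univ a),
      hdiag, one_mul, add_comm]
    congr 1
    exact Finset.sum_congr rfl fun b hb => by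
      rw [hoff a b (Ne.symm (Finset.ne_of_mem_erase hb))]
  rw [h1, hy, Finset.sum_congr rfl (fun b _ => hηr b), hηr, Finset.sum_sub_distrib,
    Finset.sum_const, nsmul_eq_mul, hcard, ← Finset.mul_sum]
  field_simp
  ring
end

section
/- Let A be a finite set with n ≥ 2 elements, π a strictly positive probability distribution on A, and v : A → ℝ. Define η(a) = log(π(a)) − v(a) and let r be any solution of the IAVI system X·r = y with y_a = η(a) − (1/(n−1))·Σ_{b≠a} η(b). Then the induced Q-function Q(a) = r(a) + v(a) satisfies softmax(Q) = π. -/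
open Real Finset

noncomputable def softmax {A : Type*} [Fintype A] (Q : A → ℝ) : A → ℝ :=
  fun a => Real.exp (Q a) / ∑ b, Real.exp (Q b)

theorem stmt_15 (n : ℕ) (hn : 2 ≤ n)
    (pol : Fin n → ℝ) (hpos : ∀ a, 0 < pol a) (hsum : ∑ a, pol a = 1)
    (v : Fin n → ℝ) (η : Fin n → ℝ)
    (hη : ∀ a, η a = Real.log (pol a) - v a)
    (X : Matrix (Fin n) (Fin n) ℝ)
    (hdiag : ∀ a, X a a = 1)
    (hoff : ∀ a b, a ≠ b → X a b = -1 / ((n : ℝ) - 1))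
    (y : Fin n → ℝ)
    (hy : ∀ a, y a = η a - (1 / ((n : ℝ) - 1)) * ∑ b ∈ Finset.univ.erase a, η b)
    (r : Fin n → ℝ) (hr : X.mulVec r = y)
    (Q : Fin n → ℝ) (hQ : ∀ a, Q a = r a + v a) :
    softmax Q = pol := by
  have hn1 : (1:ℝ) ≤ (n:ℝ) - 1 := by
    have : (2:ℝ) ≤ (n:ℝ) := by exact_mod_cast hn
    linarith
  have hne : ((n:ℝ) - 1) ≠ 0 := by linarith
  have hnne : (n:ℝ) ≠ 0 := by positivity
  set d : Fin n → ℝ := fun a => r a - η a with hd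
  -- key equation from the linear system
  have key : ∀ a, ((n:ℝ) - 1) * d a = ∑ b ∈ Finset.univ.erase a, d b := by
    intro a
    have h1 : X.mulVec r a = y a := by rw [hr]
    have h2 : X.mulVec r a = r a - (1 / ((n:ℝ)-1)) * ∑ b ∈ Finset.univ.erase a, r b := by
      simp only [Matrix.mulVec, dotProduct]
      rw [← Finset.add_sum_erase _ _ (Finset.mem_univ a), hdiag a]
      have : ∀ b ∈ Finset.univ.erase a, X a b * r b = -(1/((n:ℝ)-1)) * r b := by
        intro b hb
        rw [hoff a b (Ne.symm (Finset.ne_of_mem_erase hb))]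
        ring
      rw [Finset.sum_congr rfl this, ← Finset.mul_sum]
      ring
    rw [h2, hy a] at h1
    rw [Finset.sum_erase_eq_sub (Finset.mem_univ a)] at h1 ⊢
    rw [Finset.sum_erase_eq_sub (Finset.mem_univ a)] at h1
    have h4 : ((n:ℝ)-1) * (r a - (1/((n:ℝ)-1)) * ((∑ b, r b) - r a))
        = ((n:ℝ)-1) * (η a - (1/((n:ℝ)-1)) * ((∑ b, η b) - η a)) := by rw [h1]
    have hc : ((n:ℝ)-1) * (1/((n:ℝ)-1)) = 1 := by field_simp
    simp only [hd, Finset.sum_sub_distrib]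
    linear_combination h4 + (((∑ b, r b) - r a) - ((∑ b, η b) - η a)) * hc
  set S := ∑ b, d b with hS
  have hconst : ∀ a, d a = S / n := by
    intro a
    have h1 : ∑ b ∈ Finset.univ.erase a, d b = S - d a := by
      rw [hS, ← Finset.add_sum_erase _ _ (Finset.mem_univ a)]; ring
    have h2 := key a
    rw [h1] at h2
    have : (n:ℝ) * d a = S := by ring_nf at h2 ⊢; linarith
    field_simp
    linarith
  have hQ' : ∀ a, Q a = Real.log (pol a) + S / n := by
    intro a
    have h := hconst a
    simp only [hd, hη a] at h
    rw [hQ a]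
    linarith
  have hexp : ∀ a, Real.exp (Q a) = pol a * Real.exp (S / n) := by
    intro a
    rw [hQ' a, Real.exp_add, Real.exp_log (hpos a)]
  funext a
  unfold softmax
  rw [hexp a]
  have : ∑ b, Real.exp (Q b) = Real.exp (S / n) := by
    rw [Finset.sum_congr rfl (fun b _ => hexp b), ← Finset.sum_mul, hsum, one_mul]
  rw [this]
  field_simp
end
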